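/- Let Δ be a finitary argumentation framework and X ⊆ A admissible. Then ⋃_{k < ω} d^k(X) is the smallest complete extension of Δ that includes X. -/

import Mathlib

variable {A : Type*}

/-- The defense function of an argumentation framework with attack relation `r`. -/
def defense (r : A → A → Prop) (X : Set A) : Set A :=
  {x | ∀ y, r y x → ∃ z ∈ X, r z y}

/-- The neutrality function. -/
def neut (r : A → A → Prop) (X : Set A) : Set A :=
  {x | ¬ ∃ y ∈ X, r y x}

/-- A framework is finitary if every argument has finitely many attackers. -/
def Finitary (r : A → A → Prop) : Prop := ∀ x, {y | r y x}.Finite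

/-!
Defense is monotone and, because every argument has only finitely many attackers, it commutes
with directed unions. Admissibility of `X` makes the iterates `dᵏ(X)` an increasing chain of
conflict-free sets, so their union is conflict-free and, by continuity, a fixed point of `d`.
It is the least fixed point above `X`: if `X ⊆ E = d(E)`, then `dᵏ(X) ⊆ dᵏ(E) = E` for all `k`.
-/

theorem Monotone.iterate_le_of_le_of_map_le {α : Type*} [Preorder α] {f : α → α} (hf : Monotone f)
    {x y : α} (hxy : x ≤ y) (hy : f y ≤ y) (n : ℕ) : f^[n] x ≤ y :=
  (hf.iterate n hxy).trans (hf.antitone_iterate_of_map_le hy n.zero_le)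

section defense

variable (r : A → A → Prop)

theorem defense_mono : Monotone (defense r) := by
  intro X Y hXY x hx y hyx
  obtain ⟨z, hz, hzy⟩ := hx y hyx
  exact ⟨z, hXY hz, hzy⟩

theorem defense_subset_neut_defense {X : Set A} (hcf : X ⊆ neut r X) :
    defense r X ⊆ neut r (defense r X) := by
  rintro a ha ⟨b, hb, hba⟩
  obtain ⟨z, hz, hzb⟩ := ha b hba
  obtain ⟨w, hw, hwz⟩ := hb z hzb
  exact hcf hz ⟨w, hw, hwz⟩

theorem iterate_defense_subset_neut {X : Set A} (hcf : X ⊆ neut r X) (k : ℕ) :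
    (defense r)^[k] X ⊆ neut r ((defense r)^[k] X) := by
  induction k with
  | zero => exact hcf
  | succ k ih =>
    rw [Function.iterate_succ_apply']
    exact defense_subset_neut_defense r ih

theorem iUnion_subset_neut_iUnion {ι : Type*} {S : ι → Set A} (hS : Directed (· ⊆ ·) S)
    (hcf : ∀ i, S i ⊆ neut r (S i)) : ⋃ i, S i ⊆ neut r (⋃ i, S i) := by
  rintro a ha ⟨b, hb, hba⟩
  obtain ⟨i, hai⟩ := Set.mem_iUnion.1 ha
  obtain ⟨j, hbj⟩ := Set.mem_iUnion.1 hb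
  obtain ⟨k, hik, hjk⟩ := hS i j
  exact hcf k (hik hai) ⟨b, hjk hbj, hba⟩

theorem defense_iUnion (hfin : Finitary r) {ι : Type*} [Nonempty ι] {S : ι → Set A}
    (hS : Directed (· ⊆ ·) S) : defense r (⋃ i, S i) = ⋃ i, defense r (S i) := by
  refine le_antisymm (fun x hx => ?_) (iSup_le fun i => defense_mono r (le_iSup S i))
  have hlevel : ∀ y ∈ {y | r y x}, ∃ i, ∃ z ∈ S i, r z y := fun y hyx => by
    obtain ⟨z, hz, hzy⟩ := hx y hyx
    obtain ⟨i, hzi⟩ := Set.mem_iUnion.1 hz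
    exact ⟨i, z, hzi, hzy⟩
  classical
  choose! level hlevel using hlevel
  -- finitely many attackers, hence finitely many levels, all below a single one
  obtain ⟨j, hj⟩ := hS.finset_le ((hfin x).toFinset.image level)
  refine Set.mem_iUnion.2 ⟨j, fun y hyx => ?_⟩
  obtain ⟨z, hz, hzy⟩ := hlevel y hyx
  exact ⟨z, hj _ (Finset.mem_image_of_mem _ ((hfin x).mem_toFinset.2 hyx)) hz, hzy⟩

end defense

theorem iUnion_iterates_smallest_complete (r : A → A → Prop) (hfin : Finitary r)
    (X : Set A) (hcf : X ⊆ neut r X) (hdef : X ⊆ defense r X) :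
    (⋃ k, (defense r)^[k] X) ⊆ neut r (⋃ k, (defense r)^[k] X) ∧
      defense r (⋃ k, (defense r)^[k] X) = ⋃ k, (defense r)^[k] X ∧
      X ⊆ ⋃ k, (defense r)^[k] X ∧
      ∀ E, E ⊆ neut r E → defense r E = E → X ⊆ E →
        (⋃ k, (defense r)^[k] X) ⊆ E := by
  have hmono := (defense_mono r).monotone_iterate_of_le_map hdef
  have hfix : defense r (⋃ k, (defense r)^[k] X) = ⋃ k, (defense r)^[k] X := by
    rw [defense_iUnion r hfin hmono.directed_le]
    simp_rw [← Function.iterate_succ_apply' (defense r)]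
    exact hmono.iUnion_nat_add 1
  refine ⟨iUnion_subset_neut_iUnion r hmono.directed_le (iterate_defense_subset_neut r hcf), hfix,
    Set.subset_iUnion_of_subset 0 subset_rfl, fun E _ hE hXE => ?_⟩
  exact Set.iUnion_subset ((defense_mono r).iterate_le_of_le_of_map_le hXE hE.le)
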